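/- Let μ be a symmetric probability measure on ℝ and λ ∈ [0,1]. Define H_μ(z) = λ G_μ(1/√z)² + (1-λ)√z · G_μ(1/√z) for z in ℂ∖[0,∞), where √ is the branch of the square root mapping ℂ∖[0,∞) into the upper half plane. Then for a family A of symmetric probability measures, the following are equivalent: (i) A is tight; (ii) for every 0<θ<π, H_μ(z)/z → 1 as z → 0 with |arg z - π| < θ, uniformly in μ ∈ A; (iii) H_μ(x)/x → 1 as x → 0⁻ along the negative real axis, uniformly in μ ∈ A. -/

import Mathlib

open MeasureTheory Complex

/-! With `ζ = √z` and `ψ_μ(ζ) = ∫ tζ/(1 - tζ) dμ(t) = ζ⁻¹ G_μ(ζ⁻¹) - 1` one has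
`H_μ(z)/z - 1 = ψ_μ(ζ) (1 + λ (1 + ψ_μ(ζ)))`, so everything is about the size of `ψ_μ(ζ)`.
Its integrand is bounded by `|ζ|/|Im ζ|` and by `|t| |ζ|²/|Im ζ|`; splitting at `|t| = M` gives
`|ψ_μ(ζ)| ≤ |ζ|/|Im ζ| · (M |ζ| + μ(|t| > M))`, and `|ζ|/Im ζ ≤ 1/cos(θ/2)` in the sector, so
tightness gives uniform convergence there. Conversely, on the negative axis `ζ = i s` and
`-Re ψ_μ(i s) = ∫ s²t²/(1 + s²t²) dμ ≥ μ(|t| > 1/s)/2`, while `Re (1 + λ (1 + ψ_μ(i s))) ≥ 1`,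
so uniform convergence along the axis forces uniformly small tails. -/

/-- A probability measure on `ℝ` is symmetric if it is invariant under `x ↦ -x`. -/
def IsSymmetricMeasure (μ : Measure ℝ) : Prop := μ.map (fun x => -x) = μ

/-- The Cauchy transform `G_μ(z) = ∫ dμ(t)/(z-t)`. -/
noncomputable def cauchyT (μ : Measure ℝ) (z : ℂ) : ℂ := ∫ t, (z - (t : ℂ))⁻¹ ∂μ

/-- The branch of the square root on `ℂ∖[0,∞)` mapping into the upper half plane:
`√z = i·(-z)^{1/2}` with the principal power. -/
noncomputable def sqrtCut (z : ℂ) : ℂ := Complex.I * (-z) ^ (1 / 2 : ℂ)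

/-- The rectangular Cauchy transform with ratio `λ`:
`H_μ(z) = λ G_μ(1/√z)² + (1-λ)√z G_μ(1/√z)` for `z ∈ ℂ∖[0,∞)`. -/
noncomputable def rectH (l : ℝ) (μ : Measure ℝ) (z : ℂ) : ℂ :=
  (l : ℂ) * (cauchyT μ (sqrtCut z)⁻¹) ^ 2 +
    (1 - (l : ℂ)) * sqrtCut z * cauchyT μ (sqrtCut z)⁻¹

/-- Tightness of a family of measures on `ℝ`. -/
def TightFamily (A : Set (Measure ℝ)) : Prop :=
  ∀ ε : ℝ, 0 < ε → ∃ M : ℝ, ∀ μ ∈ A, μ (Set.Icc (-M) M)ᶜ < ENNReal.ofReal ε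

-- Voiculescu's moment generating function `ψ_μ`.
noncomputable def psiT (μ : Measure ℝ) (ζ : ℂ) : ℂ := ∫ t, t * ζ / (1 - t * ζ) ∂μ

section Pointwise

variable {ζ : ℂ} (t : ℝ)

lemma abs_mul_abs_im_le_norm_one_sub : |t| * |ζ.im| ≤ ‖1 - t * ζ‖ := by
  calc |t| * |ζ.im| = |(1 - t * ζ).im| := by simp [abs_mul]
    _ ≤ ‖1 - t * ζ‖ := abs_im_le_norm _

lemma abs_im_le_norm_mul_norm_one_sub : |ζ.im| ≤ ‖ζ‖ * ‖1 - t * ζ‖ := by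
  have him : (starRingEnd ℂ ζ * (1 - t * ζ)).im = -ζ.im := by
    simp only [mul_im, conj_re, conj_im, sub_re, sub_im, one_re, one_im, mul_re, ofReal_re,
      ofReal_im]
    ring
  simpa [him] using abs_im_le_norm (starRingEnd ℂ ζ * (1 - t * ζ))

variable {t} in
lemma one_sub_ofReal_mul_ne_zero (hζ : ζ.im ≠ 0) : 1 - t * ζ ≠ 0 := by
  intro h
  have := abs_im_le_norm_mul_norm_one_sub (ζ := ζ) t
  simp only [h, norm_zero, mul_zero] at this
  exact hζ (abs_nonpos_iff.1 this)

lemma norm_psi_integrand_le_div (hζ : ζ.im ≠ 0) : ‖t * ζ / (1 - t * ζ)‖ ≤ ‖ζ‖ / |ζ.im| := by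
  have h1 : 0 < ‖1 - t * ζ‖ := norm_pos_iff.2 (one_sub_ofReal_mul_ne_zero hζ)
  have h2 : 0 < |ζ.im| := abs_pos.2 hζ
  rw [norm_div, norm_mul, norm_real, Real.norm_eq_abs, div_le_div_iff₀ h1 h2]
  nlinarith [abs_mul_abs_im_le_norm_one_sub (ζ := ζ) t, norm_nonneg ζ]

lemma norm_psi_integrand_le_mul (hζ : ζ.im ≠ 0) :
    ‖t * ζ / (1 - t * ζ)‖ ≤ |t| * ‖ζ‖ ^ 2 / |ζ.im| := by
  have h1 : 0 < ‖1 - t * ζ‖ := norm_pos_iff.2 (one_sub_ofReal_mul_ne_zero hζ)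
  have h2 : 0 < |ζ.im| := abs_pos.2 hζ
  rw [norm_div, norm_mul, norm_real, Real.norm_eq_abs, div_le_div_iff₀ h1 h2]
  have := mul_le_mul_of_nonneg_left (abs_im_le_norm_mul_norm_one_sub (ζ := ζ) t)
    (mul_nonneg (abs_nonneg t) (norm_nonneg ζ))
  nlinarith

end Pointwise

section Transforms

variable {μ : Measure ℝ} [IsProbabilityMeasure μ] {ζ : ℂ}

lemma integrable_psi_integrand (hζ : ζ.im ≠ 0) :
    Integrable (fun t : ℝ => t * ζ / (1 - t * ζ)) μ := by
  refine .of_bound ?_ _ (ae_of_all _ (norm_psi_integrand_le_div · hζ))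
  exact (Continuous.div (by fun_prop) (by fun_prop)
    fun t => one_sub_ofReal_mul_ne_zero hζ).aestronglyMeasurable

lemma inv_mul_cauchyT_inv (hζ : ζ.im ≠ 0) : ζ⁻¹ * cauchyT μ ζ⁻¹ = 1 + psiT μ ζ := by
  have hζ0 : ζ ≠ 0 := fun h => hζ (by simp [h])
  have hpt : ∀ t : ℝ, ζ⁻¹ * (ζ⁻¹ - t)⁻¹ = 1 + t * ζ / (1 - t * ζ) := by
    intro t
    have h := one_sub_ofReal_mul_ne_zero (t := t) hζ
    rw [show (ζ⁻¹ - t : ℂ) = ζ⁻¹ * (1 - t * ζ) by field_simp, mul_inv, inv_inv,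
      ← mul_assoc, inv_mul_cancel₀ hζ0, one_mul]
    field_simp
    ring
  rw [cauchyT, ← integral_const_mul, integral_congr_ae (ae_of_all _ hpt),
    integral_add (integrable_const _) (integrable_psi_integrand hζ), psiT]
  simp

lemma norm_psiT_le_div (hζ : ζ.im ≠ 0) : ‖psiT μ ζ‖ ≤ ‖ζ‖ / |ζ.im| := by
  rw [psiT]
  simpa using norm_integral_le_of_norm_le_const (μ := μ)
    (ae_of_all _ (norm_psi_integrand_le_div · hζ))

lemma norm_psiT_le (hζ : ζ.im ≠ 0) {M : ℝ} (hM : 0 ≤ M) :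
    ‖psiT μ ζ‖ ≤ ‖ζ‖ / |ζ.im| * (M * ‖ζ‖ + μ.real (Set.Icc (-M) M)ᶜ) := by
  have hmeas : MeasurableSet (Set.Icc (-M) M)ᶜ := measurableSet_Icc.compl
  calc ‖psiT μ ζ‖
      ≤ ∫ t, ‖ζ‖ / |ζ.im| * (M * ‖ζ‖ + (Set.Icc (-M) M)ᶜ.indicator 1 t) ∂μ := by
        refine norm_integral_le_of_norm_le
          (((integrable_const _).add ((integrable_const 1).indicator hmeas)).const_mul _)
          (ae_of_all _ fun t => ?_)
        by_cases ht : t ∈ Set.Icc (-M) M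
        · have htM : |t| ≤ M := abs_le.2 ht
          calc ‖t * ζ / (1 - t * ζ)‖ ≤ |t| * ‖ζ‖ ^ 2 / |ζ.im| := norm_psi_integrand_le_mul t hζ
            _ ≤ M * ‖ζ‖ ^ 2 / |ζ.im| := by gcongr
            _ = _ := by
              rw [Set.indicator_of_notMem (Set.notMem_compl_iff.2 ht), add_zero]
              ring
        · calc ‖t * ζ / (1 - t * ζ)‖ ≤ ‖ζ‖ / |ζ.im| * 1 := by
                simpa using norm_psi_integrand_le_div t hζ
            _ ≤ ‖ζ‖ / |ζ.im| * (M * ‖ζ‖ + 1) := by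
                gcongr
                exact le_add_of_nonneg_left (by positivity)
            _ = _ := by simp [ht]
    _ = ‖ζ‖ / |ζ.im| * (M * ‖ζ‖ + μ.real (Set.Icc (-M) M)ᶜ) := by
        rw [integral_const_mul, integral_add (integrable_const _)
          ((integrable_const 1).indicator hmeas), integral_indicator_one hmeas]
        simp

lemma re_psiT_I_mul {s : ℝ} (hs : s ≠ 0) :
    (psiT μ (I * s)).re = -∫ t, (t * s) ^ 2 / (1 + (t * s) ^ 2) ∂μ := by
  rw [psiT, ← integral_neg, ← RCLike.re_to_complex,
    ← integral_re (integrable_psi_integrand (by simpa using hs))]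
  congr 1 with t
  have : (1 : ℝ) + (t * s) ^ 2 ≠ 0 := by positivity
  simp only [RCLike.re_to_complex, div_re, mul_re, ofReal_re, I_re, zero_mul, I_im, ofReal_im,
    mul_zero, sub_self, mul_im, one_mul, zero_add, sub_re, one_re, sub_zero, mul_one, normSq_apply,
    sub_im, one_im, add_zero, zero_sub, mul_neg, neg_mul, neg_neg, zero_div]
  field_simp

lemma measureReal_compl_Icc_le_neg_re_psiT {s : ℝ} (hs : 0 < s) :
    μ.real (Set.Icc (-s⁻¹) s⁻¹)ᶜ / 2 ≤ -(psiT μ (I * s)).re := by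
  have hmeas : MeasurableSet (Set.Icc (-s⁻¹) s⁻¹)ᶜ := measurableSet_Icc.compl
  have hint : Integrable (fun t : ℝ => (t * s) ^ 2 / (1 + (t * s) ^ 2)) μ := by
    refine .of_bound ((Continuous.div (by fun_prop) (by fun_prop)
      fun t => by positivity).aestronglyMeasurable) 1
      (ae_of_all _ fun t => ?_)
    rw [Real.norm_of_nonneg (by positivity), div_le_one (by positivity)]
    linarith
  rw [re_psiT_I_mul hs.ne', neg_neg, ← integral_indicator_one hmeas, ← integral_div]
  refine integral_mono (((integrable_const 1).indicator hmeas).div_const 2) hint fun t => ?_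
  by_cases ht : t ∈ Set.Icc (-s⁻¹) s⁻¹
  · simp only [Set.indicator_of_notMem (Set.notMem_compl_iff.2 ht), zero_div]
    positivity
  · simp only [Set.indicator_of_mem (Set.mem_compl ht), Pi.one_apply]
    have h1 : 1 < (t * s) ^ 2 := by
      have hst : s⁻¹ < |t| := lt_of_not_ge fun h => ht (abs_le.1 h)
      rw [inv_lt_iff_one_lt_mul₀ hs, ← abs_of_pos hs, ← abs_mul] at hst
      exact (one_lt_sq_iff_one_lt_abs _).2 hst
    rw [le_div_iff₀ (by positivity)]
    linarith

end Transforms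

section SqrtCut

lemma sqrtCut_sq (z : ℂ) : sqrtCut z ^ 2 = z := by
  rw [sqrtCut, mul_pow, I_sq, ← cpow_nat_mul]
  norm_num

lemma norm_sqrtCut (z : ℂ) : ‖sqrtCut z‖ = √‖z‖ := by
  conv_rhs => rw [← sqrtCut_sq z, norm_pow, Real.sqrt_sq (norm_nonneg _)]

lemma im_sqrtCut (z : ℂ) : (sqrtCut z).im = ‖sqrtCut z‖ * Real.cos (arg (-z) / 2) := by
  have h := cpow_ofReal_re (-z) (1 / 2)
  rw [norm_neg, ← Real.sqrt_eq_rpow, ← norm_sqrtCut] at h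
  push_cast at h
  rw [show (sqrtCut z).im = ((-z) ^ (1 / 2 : ℂ)).re by simp [sqrtCut], h, mul_one_div]

lemma abs_arg_neg_lt {z : ℂ} {θ : ℝ} (hθ : θ < Real.pi) (h : |arg z - Real.pi| < θ) :
    |arg (-z)| < θ := by
  have harg : 0 < arg z := by linarith [(abs_lt.1 h).1]
  suffices arg (-z) = arg z - Real.pi by rwa [this]
  refine arg_neg_eq_arg_sub_pi_iff.2 (or_iff_not_imp_left.2 fun him => ?_)
  have him0 : z.im = 0 := le_antisymm (not_lt.1 him) (arg_nonneg_iff.1 harg.le)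
  refine ⟨him0, lt_of_not_ge fun hre => ?_⟩
  exact harg.ne' (arg_eq_zero_iff.2 ⟨hre, him0⟩)

lemma cos_half_mul_norm_le_im_sqrtCut {z : ℂ} {θ : ℝ} (hθ : θ < Real.pi)
    (h : |arg z - Real.pi| < θ) : Real.cos (θ / 2) * ‖sqrtCut z‖ ≤ (sqrtCut z).im := by
  rw [im_sqrtCut, mul_comm]
  gcongr
  rw [← Real.cos_abs (arg (-z) / 2), abs_div, abs_two]
  have := abs_arg_neg_lt hθ h
  have := abs_nonneg (arg (-z))
  apply Real.cos_le_cos_of_nonneg_of_le_pi (by positivity) (by linarith) (by linarith)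

lemma im_sqrtCut_pos {z : ℂ} {θ : ℝ} (hθ : θ < Real.pi) (h : |arg z - Real.pi| < θ)
    (hz : z ≠ 0) : 0 < (sqrtCut z).im := by
  have hc : 0 < Real.cos (θ / 2) := Real.cos_pos_of_mem_Ioo
    ⟨by linarith [abs_nonneg (arg z - Real.pi)], by linarith⟩
  have hζ : 0 < ‖sqrtCut z‖ := by
    rw [norm_sqrtCut]
    exact Real.sqrt_pos.2 (norm_pos_iff.2 hz)
  exact (mul_pos hc hζ).trans_le (cos_half_mul_norm_le_im_sqrtCut hθ h)

lemma sqrtCut_ofReal_neg_sq {s : ℝ} (hs : 0 ≤ s) : sqrtCut ((-s ^ 2 : ℝ) : ℂ) = I * s := by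
  rw [sqrtCut, ofReal_neg, neg_neg, show (1 / 2 : ℂ) = ((1 / 2 : ℝ) : ℂ) by norm_num,
    ← ofReal_cpow (by positivity), ← Real.sqrt_eq_rpow, Real.sqrt_sq hs]

end SqrtCut

section RectH

variable (l : ℝ) {μ : Measure ℝ} [IsProbabilityMeasure μ] {z : ℂ}

lemma rectH_div_sub_one (him : (sqrtCut z).im ≠ 0) :
    rectH l μ z / z - 1 = psiT μ (sqrtCut z) * (1 + l * (1 + psiT μ (sqrtCut z))) := by
  have hζ0 : sqrtCut z ≠ 0 := fun h => him (by simp [h])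
  have hG : cauchyT μ (sqrtCut z)⁻¹ = sqrtCut z * (1 + psiT μ (sqrtCut z)) := by
    rw [← inv_mul_cauchyT_inv him, mul_inv_cancel_left₀ hζ0]
  have hz : z = sqrtCut z ^ 2 := (sqrtCut_sq z).symm
  rw [rectH, hG]
  set ζ := sqrtCut z
  rw [hz]
  field_simp
  ring

variable {l}

lemma norm_rectH_div_sub_one_le (hl : l ∈ Set.Icc (0 : ℝ) 1) (him : (sqrtCut z).im ≠ 0) :
    ‖rectH l μ z / z - 1‖ ≤ ‖psiT μ (sqrtCut z)‖ * (2 + ‖psiT μ (sqrtCut z)‖) := by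
  rw [rectH_div_sub_one l him, norm_mul]
  gcongr
  set ψ := psiT μ (sqrtCut z)
  obtain ⟨hl0, hl1⟩ := hl
  calc ‖1 + l * (1 + ψ)‖ ≤ 1 + l * ‖1 + ψ‖ := by
        refine (norm_add_le _ _).trans_eq ?_
        rw [norm_one, norm_mul, norm_real, Real.norm_of_nonneg hl0]
    _ ≤ 1 + l * (1 + ‖ψ‖) := by
        gcongr
        exact (norm_add_le (1 : ℂ) ψ).trans_eq (by rw [norm_one])
    _ ≤ 2 + ‖ψ‖ := by nlinarith [norm_nonneg ψ]

lemma norm_psiT_le_norm_rectH_div_sub_one (hl : 0 ≤ l) (him : (sqrtCut z).im ≠ 0)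
    (hre : -1 ≤ (psiT μ (sqrtCut z)).re) :
    ‖psiT μ (sqrtCut z)‖ ≤ ‖rectH l μ z / z - 1‖ := by
  rw [rectH_div_sub_one l him, norm_mul]
  refine le_mul_of_one_le_right (norm_nonneg _) ?_
  calc (1 : ℝ) ≤ (1 + l * (1 + psiT μ (sqrtCut z))).re := by
        simp only [add_re, one_re, re_ofReal_mul]
        nlinarith
    _ ≤ _ := re_le_norm _

lemma norm_psiT_sqrtCut_le {θ M : ℝ} (hθ : θ < Real.pi) (h : |arg z - Real.pi| < θ)
    (hz : z ≠ 0) (hM : 0 ≤ M) :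
    ‖psiT μ (sqrtCut z)‖ ≤
      (M * ‖sqrtCut z‖ + μ.real (Set.Icc (-M) M)ᶜ) / Real.cos (θ / 2) := by
  have hc : 0 < Real.cos (θ / 2) := Real.cos_pos_of_mem_Ioo
    ⟨by linarith [abs_nonneg (arg z - Real.pi)], by linarith⟩
  have him := im_sqrtCut_pos hθ h hz
  have hK : ‖sqrtCut z‖ / |(sqrtCut z).im| ≤ 1 / Real.cos (θ / 2) := by
    rw [abs_of_pos him, div_le_div_iff₀ him hc, mul_comm, one_mul]
    exact cos_half_mul_norm_le_im_sqrtCut hθ h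
  calc ‖psiT μ (sqrtCut z)‖
      ≤ ‖sqrtCut z‖ / |(sqrtCut z).im| * (M * ‖sqrtCut z‖ + μ.real (Set.Icc (-M) M)ᶜ) :=
        norm_psiT_le him.ne' hM
    _ ≤ 1 / Real.cos (θ / 2) * (M * ‖sqrtCut z‖ + μ.real (Set.Icc (-M) M)ᶜ) := by gcongr
    _ = _ := one_div_mul_eq_div _ _

lemma measureReal_compl_Icc_le_norm_rectH_div_sub_one (hl : 0 ≤ l) {s : ℝ} (hs : 0 < s) :
    μ.real (Set.Icc (-s⁻¹) s⁻¹)ᶜ / 2 ≤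
      ‖rectH l μ ((-s ^ 2 : ℝ) : ℂ) / ((-s ^ 2 : ℝ) : ℂ) - 1‖ := by
  have him : (I * s).im ≠ 0 := by simpa using hs.ne'
  have hre : -1 ≤ (psiT μ (I * s)).re := by
    have : ‖psiT μ (I * s)‖ ≤ 1 := by
      simpa [abs_of_pos hs, hs.ne'] using norm_psiT_le_div (μ := μ) him
    linarith [neg_abs_le (psiT μ (I * s)).re, abs_re_le_norm (psiT μ (I * s))]
  rw [← sqrtCut_ofReal_neg_sq hs.le] at him hre
  calc μ.real (Set.Icc (-s⁻¹) s⁻¹)ᶜ / 2 ≤ -(psiT μ (I * s)).re :=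
        measureReal_compl_Icc_le_neg_re_psiT hs
    _ ≤ ‖psiT μ (I * s)‖ := (neg_le_abs _).trans (abs_re_le_norm _)
    _ ≤ _ := by
        rw [← sqrtCut_ofReal_neg_sq hs.le]
        exact norm_psiT_le_norm_rectH_div_sub_one hl him hre

end RectH

def RectHSectorLimit (l : ℝ) (A : Set (Measure ℝ)) : Prop :=
  ∀ θ : ℝ, 0 < θ → θ < Real.pi →
    ∀ ε : ℝ, 0 < ε → ∃ δ : ℝ, 0 < δ ∧
      ∀ μ ∈ A, ∀ z : ℂ, z ≠ 0 → ‖z‖ < δ → |Complex.arg z - Real.pi| < θ →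
        ‖rectH l μ z / z - 1‖ < ε

def RectHAxisLimit (l : ℝ) (A : Set (Measure ℝ)) : Prop :=
  ∀ ε : ℝ, 0 < ε → ∃ δ : ℝ, 0 < δ ∧
    ∀ μ ∈ A, ∀ x : ℝ, -δ < x → x < 0 →
      ‖rectH l μ (x : ℂ) / (x : ℂ) - 1‖ < ε

variable {A : Set (Measure ℝ)}

lemma tightFamily_iff_measureReal (hA : ∀ μ ∈ A, IsFiniteMeasure μ) :
    TightFamily A ↔
      ∀ ε : ℝ, 0 < ε → ∃ M : ℝ, 0 ≤ M ∧ ∀ μ ∈ A, μ.real (Set.Icc (-M) M)ᶜ < ε := by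
  have hlt : ∀ μ ∈ A, ∀ (M ε : ℝ),
      μ (Set.Icc (-M) M)ᶜ < ENNReal.ofReal ε ↔ μ.real (Set.Icc (-M) M)ᶜ < ε :=
    fun μ hμ _ _ => have := hA μ hμ; ENNReal.lt_ofReal_iff_toReal_lt (measure_ne_top _ _)
  refine ⟨fun hT ε hε => ?_, fun h ε hε => ?_⟩
  · obtain ⟨M, hM⟩ := hT ε hε
    refine ⟨max M 0, le_max_right _ _, fun μ hμ => ?_⟩
    have := hA μ hμ
    refine lt_of_le_of_lt (measureReal_mono ?_) ((hlt μ hμ M ε).1 (hM μ hμ))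
    exact Set.compl_subset_compl.2 (Set.Icc_subset_Icc (by simp) (le_max_left _ _))
  · obtain ⟨M, -, hM⟩ := h ε hε
    exact ⟨M, fun μ hμ => (hlt μ hμ M ε).2 (hM μ hμ)⟩

lemma TightFamily.rectHSectorLimit {l : ℝ} (hl : l ∈ Set.Icc (0 : ℝ) 1)
    (hA : ∀ μ ∈ A, IsProbabilityMeasure μ) (hT : TightFamily A) : RectHSectorLimit l A := by
  intro θ hθ0 hθ ε hε
  have hc : 0 < Real.cos (θ / 2) := Real.cos_pos_of_mem_Ioo ⟨by linarith, by linarith⟩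
  set η := min 1 (ε / 3)
  have hη : 0 < η := lt_min one_pos (by linarith)
  have hF : ∀ μ ∈ A, IsFiniteMeasure μ := fun μ hμ => have := hA μ hμ; inferInstance
  obtain ⟨M, hM, hMtail⟩ :=
    (tightFamily_iff_measureReal hF).1 hT (Real.cos (θ / 2) * η / 2) (by positivity)
  set r := Real.cos (θ / 2) * η / (2 * (M + 1)) with hr
  refine ⟨r ^ 2, by positivity, fun μ hμ z hz hzδ harg => ?_⟩
  have := hA μ hμ
  have hζr : ‖sqrtCut z‖ < r := by
    rw [norm_sqrtCut, Real.sqrt_lt' (by positivity)]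
    exact hzδ
  have hψ : ‖psiT μ (sqrtCut z)‖ < η := by
    refine (norm_psiT_sqrtCut_le hθ harg hz hM).trans_lt ?_
    rw [div_lt_iff₀ hc]
    have : M * ‖sqrtCut z‖ ≤ Real.cos (θ / 2) * η / 2 := calc
      M * ‖sqrtCut z‖ ≤ (M + 1) * r := by gcongr; linarith
      _ = Real.cos (θ / 2) * η / 2 := by rw [hr]; field_simp
    linarith [hMtail μ hμ]
  have him := (im_sqrtCut_pos hθ harg hz).ne'
  calc ‖rectH l μ z / z - 1‖ ≤ ‖psiT μ (sqrtCut z)‖ * (2 + ‖psiT μ (sqrtCut z)‖) :=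
        norm_rectH_div_sub_one_le hl him
    _ < η * 3 := by
        have : η ≤ 1 := min_le_left _ _
        nlinarith [norm_nonneg (psiT μ (sqrtCut z))]
    _ ≤ ε := by linarith [min_le_right 1 (ε / 3)]

lemma RectHSectorLimit.rectHAxisLimit {l : ℝ} (h : RectHSectorLimit l A) :
    RectHAxisLimit l A := by
  intro ε hε
  obtain ⟨δ, hδ, hz⟩ := h (Real.pi / 2) (by positivity) (by linarith [Real.pi_pos]) ε hε
  refine ⟨δ, hδ, fun μ hμ x hδx hx => hz μ hμ x (by exact_mod_cast hx.ne) ?_ ?_⟩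
  · rw [norm_real, Real.norm_of_nonpos hx.le]
    linarith
  · rw [arg_ofReal_of_neg hx, sub_self, abs_zero]
    positivity

lemma RectHAxisLimit.tightFamily {l : ℝ} (hl : 0 ≤ l) (hA : ∀ μ ∈ A, IsProbabilityMeasure μ)
    (h : RectHAxisLimit l A) : TightFamily A := by
  have hF : ∀ μ ∈ A, IsFiniteMeasure μ := fun μ hμ => have := hA μ hμ; inferInstance
  refine (tightFamily_iff_measureReal hF).2 fun ε hε => ?_
  obtain ⟨δ, hδ, hx⟩ := h (ε / 2) (by positivity)
  set s := √δ / 2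
  have hs : 0 < s := by positivity
  refine ⟨s⁻¹, by positivity, fun μ hμ => ?_⟩
  have := hA μ hμ
  have hsδ : s ^ 2 < δ := by
    rw [div_pow, Real.sq_sqrt hδ.le]
    linarith
  have := hx μ hμ (-s ^ 2) (by linarith) (by nlinarith)
  linarith [measureReal_compl_Icc_le_norm_rectH_div_sub_one (μ := μ) hl hs]

/-- for a family `A` of symmetric probability measures on `ℝ` and
`λ ∈ [0,1]`, tightness of `A` is equivalent to the uniform convergence
`H_μ(z)/z → 1` as `z → 0` in sectors `|arg z - π| < θ`, and also to the uniform
convergence `H_μ(x)/x → 1` as `x → 0⁻` along the negative real axis. -/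
theorem tight_iff_rectH (l : ℝ) (hl : l ∈ Set.Icc (0 : ℝ) 1)
    (A : Set (Measure ℝ))
    (hA : ∀ μ ∈ A, IsProbabilityMeasure μ ∧ IsSymmetricMeasure μ) :
    (TightFamily A ↔
      ∀ θ : ℝ, 0 < θ → θ < Real.pi →
        ∀ ε : ℝ, 0 < ε → ∃ δ : ℝ, 0 < δ ∧
          ∀ μ ∈ A, ∀ z : ℂ, z ≠ 0 → ‖z‖ < δ → |Complex.arg z - Real.pi| < θ →
            ‖rectH l μ z / z - 1‖ < ε) ∧
    (TightFamily A ↔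
      ∀ ε : ℝ, 0 < ε → ∃ δ : ℝ, 0 < δ ∧
        ∀ μ ∈ A, ∀ x : ℝ, -δ < x → x < 0 →
          ‖rectH l μ (x : ℂ) / (x : ℂ) - 1‖ < ε) := by
  have hP : ∀ μ ∈ A, IsProbabilityMeasure μ := fun μ hμ => (hA μ hμ).1
  have sector : TightFamily A → RectHSectorLimit l A := TightFamily.rectHSectorLimit hl hP
  have axis : RectHSectorLimit l A → RectHAxisLimit l A := RectHSectorLimit.rectHAxisLimit
  have tight : RectHAxisLimit l A → TightFamily A := RectHAxisLimit.tightFamily hl.1 hP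
  exact ⟨⟨sector, tight ∘ axis⟩, ⟨axis ∘ sector, tight⟩⟩
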